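/- Let θ, D₁, D₂ be random variables on a common probability space taking values in finite sets Θ, 𝒟₁, 𝒟₂ respectively, and suppose θ and D₂ are conditionally independent given D₁ (i.e., θ → D₁ → D₂ forms a Markov chain). Let ℋ be a nonempty finite set of models and L : ℋ × Θ → ℝ an expected-loss function. Then the minimum expected loss achievable using D₁ is at most that achievable using D₂: min over all functions h₁ : 𝒟₁ → ℋ of E[ L(h₁(D₁), θ) ] ≤ min over all functions h₂ : 𝒟₂ → ℋ of E[ L(h₂(D₂), θ) ], where expectations are over the joint law of (θ, D₁, D₂). -/

import Mathlib

open Finset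
open scoped Classical

/-- Probability of an event under a pmf on a finite sample space. -/
noncomputable def pr {Ω : Type*} [Fintype Ω] (p : Ω → ℝ) (E : Ω → Prop) : ℝ :=
  ∑ ω, if E ω then p ω else 0

/-- Conditional probability `p(E | F)`. -/
noncomputable def cpr {Ω : Type*} [Fintype Ω] (p : Ω → ℝ) (E F : Ω → Prop) : ℝ :=
  pr p (fun ω => E ω ∧ F ω) / pr p F

/-- `X` and `Y` are conditionally independent given `Z`. -/
def CondIndepRV {Ω A B C : Type*} [Fintype Ω] (p : Ω → ℝ)
    (X : Ω → A) (Y : Ω → B) (Z : Ω → C) : Prop :=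
  ∀ x y z, 0 < pr p (fun ω => Z ω = z) →
    cpr p (fun ω => X ω = x ∧ Y ω = y) (fun ω => Z ω = z) =
      cpr p (fun ω => X ω = x) (fun ω => Z ω = z) *
      cpr p (fun ω => Y ω = y) (fun ω => Z ω = z)

/-! Choose `h₁ d₁` minimising the posterior risk `∑ t, p(θ = t, D₁ = d₁) * L h t`. On the event
`D₁ = d₁` the data `D₂` is independent of `θ`, so there any rule `h₂` is a mixture, with weights
`p(D₂ = d₂ | D₁ = d₁)`, of the constant decisions `h₂ d₂`, none of which beats `h₁ d₁`. -/

section Pr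

variable {Ω : Type*} [Fintype Ω] {p : Ω → ℝ}

theorem pr_nonneg (hp : ∀ ω, 0 ≤ p ω) (E : Ω → Prop) : 0 ≤ pr p E :=
  Finset.sum_nonneg fun ω _ => by split_ifs <;> simp [hp ω]

theorem pr_congr {E F : Ω → Prop} (h : ∀ ω, E ω ↔ F ω) : pr p E = pr p F := by
  simp only [pr, h]

theorem pr_eq_sum_pr_and {B : Type*} [Fintype B] (E : Ω → Prop) (Y : Ω → B) :
    pr p E = ∑ y, pr p (fun ω => E ω ∧ Y ω = y) := by
  simp only [pr]
  rw [Finset.sum_comm]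
  refine Finset.sum_congr rfl fun ω _ => ?_
  by_cases hE : E ω <;> simp [hE]

theorem sum_mul_comp_eq_sum_pr {A : Type*} [Fintype A] (X : Ω → A) (g : A → ℝ) :
    ∑ ω, p ω * g (X ω) = ∑ x, pr p (fun ω => X ω = x) * g x := by
  simp only [pr, Finset.sum_mul, ite_mul, zero_mul]
  rw [Finset.sum_comm]
  exact Finset.sum_congr rfl fun ω _ => by
    convert (Fintype.sum_ite_eq (X ω) fun x => p ω * g x).symm

theorem CondIndepRV.pr_and_mul_pr {A B C : Type*} {X : Ω → A} {Y : Ω → B} {Z : Ω → C}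
    (hXY : CondIndepRV p X Y Z) (x : A) (y : B) (z : C) (hz : 0 < pr p (fun ω => Z ω = z)) :
    pr p (fun ω => (X ω = x ∧ Y ω = y) ∧ Z ω = z) * pr p (fun ω => Z ω = z) =
      pr p (fun ω => X ω = x ∧ Z ω = z) * pr p (fun ω => Y ω = y ∧ Z ω = z) := by
  have h := hXY x y z hz
  simp only [cpr] at h
  field_simp at h
  linear_combination h

noncomputable def fiberJoint {A B C : Type*} (p : Ω → ℝ) (X : Ω → A) (Y : Ω → B) (Z : Ω → C)
    (z : C) (x : A) (y : B) : ℝ :=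
  pr p (fun ω => (X ω = x ∧ Y ω = y) ∧ Z ω = z)

section Fiber

variable {A B C : Type*} [Fintype A] [Fintype B] {X : Ω → A} {Y : Ω → B} {Z : Ω → C}

theorem sum_mul_eq_sum_fiberJoint [Fintype C] (g : A → B → C → ℝ) :
    ∑ ω, p ω * g (X ω) (Y ω) (Z ω) = ∑ z, ∑ x, ∑ y, fiberJoint p X Y Z z x y * g x y z := by
  rw [sum_mul_comp_eq_sum_pr (fun ω => (Z ω, X ω, Y ω)) fun w => g w.2.1 w.2.2 w.1]
  simp only [Fintype.sum_prod_type, Prod.mk.injEq]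
  exact Finset.sum_congr rfl fun z _ => Finset.sum_congr rfl fun x _ =>
    Finset.sum_congr rfl fun y _ => congrArg (· * _) (pr_congr fun ω => by tauto)

theorem CondIndepRV.fiberJoint_mul_sum (hXY : CondIndepRV p X Y Z) (z : C)
    (hz : 0 < ∑ x, ∑ y, fiberJoint p X Y Z z x y) (x : A) (y : B) :
    fiberJoint p X Y Z z x y * ∑ x', ∑ y', fiberJoint p X Y Z z x' y' =
      (∑ y', fiberJoint p X Y Z z x y') * ∑ x', fiberJoint p X Y Z z x' y := by
  have hX (x : A) : ∑ y', fiberJoint p X Y Z z x y' = pr p (fun ω => X ω = x ∧ Z ω = z) := by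
    rw [pr_eq_sum_pr_and _ Y]
    exact Finset.sum_congr rfl fun y' _ => pr_congr fun ω => by tauto
  have hY : ∑ x', fiberJoint p X Y Z z x' y = pr p (fun ω => Y ω = y ∧ Z ω = z) := by
    rw [pr_eq_sum_pr_and _ X]
    exact Finset.sum_congr rfl fun x' _ => pr_congr fun ω => by tauto
  have hZ : ∑ x', ∑ y', fiberJoint p X Y Z z x' y' = pr p (fun ω => Z ω = z) := by
    rw [pr_eq_sum_pr_and _ X]
    exact Finset.sum_congr rfl fun x' _ => (hX x').trans (pr_congr fun ω => by tauto)
  rw [hZ] at hz ⊢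
  rw [hX, hY]
  exact hXY.pr_and_mul_pr x y z hz

end Fiber

end Pr


theorem sum_risk_le_of_indep {Θ D H : Type*} [Fintype Θ] [Fintype D] (q : Θ → D → ℝ)
    (hq : ∀ t d, 0 ≤ q t d)
    (hind : 0 < ∑ t, ∑ d, q t d →
      ∀ t d, q t d * ∑ t', ∑ d', q t' d' = (∑ d', q t d') * ∑ t', q t' d)
    (L : H → Θ → ℝ) (h₀ : H) (hh₀ : ∀ h, ∑ t, (∑ d, q t d) * L h₀ t ≤ ∑ t, (∑ d, q t d) * L h t)
    (g : D → H) :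
    ∑ t, (∑ d, q t d) * L h₀ t ≤ ∑ t, ∑ d, q t d * L (g d) t := by
  set m := ∑ t, ∑ d, q t d
  rcases (Finset.sum_nonneg fun t _ => Finset.sum_nonneg fun d _ => hq t d : 0 ≤ m).eq_or_lt
    with hm | hm
  · have hq0 : ∀ t d, q t d = 0 := fun t d =>
      (Finset.sum_eq_zero_iff_of_nonneg fun d _ => hq t d).mp
        ((Finset.sum_eq_zero_iff_of_nonneg fun t _ => Finset.sum_nonneg fun d _ => hq t d).mp
          hm.symm t (Finset.mem_univ t)) d (Finset.mem_univ d)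
    simp [hq0]
  refine le_of_mul_le_mul_left ?_ hm
  calc m * ∑ t, (∑ d, q t d) * L h₀ t
      = ∑ d, (∑ t', q t' d) * ∑ t, (∑ d', q t d') * L h₀ t := by
        rw [← Finset.sum_mul, Finset.sum_comm]
    _ ≤ ∑ d, (∑ t', q t' d) * ∑ t, (∑ d', q t d') * L (g d) t :=
        Finset.sum_le_sum fun d _ => mul_le_mul_of_nonneg_left (hh₀ (g d))
          (Finset.sum_nonneg fun t _ => hq t d)
    _ = m * ∑ t, ∑ d, q t d * L (g d) t := by
        simp only [Finset.mul_sum]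
        rw [Finset.sum_comm]
        refine Finset.sum_congr rfl fun t _ => Finset.sum_congr rfl fun d _ => ?_
        rw [← mul_assoc, mul_comm (∑ t', q t' d), ← hind hm t d]
        ring

theorem stmt11_general {Ω Θ D₁ D₂ H : Type*} [Fintype Ω] [Fintype Θ] [Fintype D₁] [Fintype D₂]
    [Fintype H] [Nonempty H]
    (p : Ω → ℝ) (hp : ∀ ω, 0 ≤ p ω)
    (θv : Ω → Θ) (D1v : Ω → D₁) (D2v : Ω → D₂)
    (hCI : CondIndepRV p θv D2v D1v)
    (L : H → Θ → ℝ) :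
    (⨅ h₁ : D₁ → H, ∑ ω, p ω * L (h₁ (D1v ω)) (θv ω)) ≤
      ⨅ h₂ : D₂ → H, ∑ ω, p ω * L (h₂ (D2v ω)) (θv ω) := by
  set q := fiberJoint p θv D2v D1v
  choose h₀ hh₀ using fun d₁ => Finite.exists_min fun h => ∑ t, (∑ d₂, q d₁ t d₂) * L h t
  refine le_ciInf fun h₂ => (ciInf_le (Set.finite_range _).bddBelow h₀).trans ?_
  rw [sum_mul_eq_sum_fiberJoint fun t (_ : D₂) d₁ => L (h₀ d₁) t,
    sum_mul_eq_sum_fiberJoint fun t d₂ (_ : D₁) => L (h₂ d₂) t]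
  refine Finset.sum_le_sum fun d₁ _ => ?_
  simp only [← Finset.sum_mul]
  exact sum_risk_le_of_indep (q d₁) (fun t d₂ => pr_nonneg hp _) (hCI.fiberJoint_mul_sum d₁) L
    (h₀ d₁) (hh₀ d₁) h₂

/-- Blackwell's theorem on decision-making superiority (discrete form): if
`θ → D₁ → D₂` is a Markov chain, the minimum expected loss achievable with
decision rules based on `D₁` is at most that achievable with rules based on `D₂`. -/
theorem stmt11 {Ω Θ D₁ D₂ H : Type*} [Fintype Ω] [Fintype Θ] [Fintype D₁] [Fintype D₂]
    [Fintype H] [Nonempty Θ] [Nonempty D₁] [Nonempty D₂] [Nonempty H]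
    (p : Ω → ℝ) (hp : ∀ ω, 0 ≤ p ω) (hps : ∑ ω, p ω = 1)
    (θv : Ω → Θ) (D1v : Ω → D₁) (D2v : Ω → D₂)
    (hCI : CondIndepRV p θv D2v D1v)
    (L : H → Θ → ℝ) :
    (⨅ h₁ : D₁ → H, ∑ ω, p ω * L (h₁ (D1v ω)) (θv ω)) ≤
      ⨅ h₂ : D₂ → H, ∑ ω, p ω * L (h₂ (D2v ω)) (θv ω) :=
  stmt11_general p hp θv D1v D2v hCI L
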